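/- h satisfies the Codazzi condition if and only if for all smooth functions f, g, m : E → ℝ and all x ∈ E, Dg(x)(∇_{X_f} X_m(x)) = Df(x)(∇_{X_g} X_m(x)). (Proposition 'hamilton', equivalence (i) ⟺ (iii), Section 6.) -/

import Mathlib

/-!
Statement 5 (Proposition `hamilton`, (i) ⟺ (iii), Section 6): for a torsionless
connection with Christoffel tensor `Γ` on `E` and a symmetric bivector field
`h` (encoded by its sharp field `hs`), `h` satisfies the Codazzi condition iff
for all smooth functions `f, g, m` and every `x`,
`Dg(x)(∇_{X_f} X_m(x)) = Df(x)(∇_{X_g} X_m(x))`.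
-/

noncomputable section

variable {E : Type*} [NormedAddCommGroup E] [NormedSpace ℝ E]

/-- The scalar function `x ↦ h(x)(α(x), β(x))`. -/
def hfun (hs : E → (E →L[ℝ] ℝ) →L[ℝ] E) (α β : E → (E →L[ℝ] ℝ)) (x : E) : ℝ :=
  (β x) (hs x (α x))

/-- Covariant derivative of the vector field `Y` along `X`:
`∇_X Y(x) = DY(x)(X(x)) + Γ(x)(X(x), Y(x))`. -/
def covD (Γ : E → E →L[ℝ] E →L[ℝ] E) (X Y : E → E) (x : E) : E :=
  fderiv ℝ Y x (X x) + Γ x (X x) (Y x)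

/-- The hamiltonian-type vector field `X_f(x) = h_#(x)(Df(x))`. -/
def Xf (hs : E → (E →L[ℝ] ℝ) →L[ℝ] E) (f : E → ℝ) (x : E) : E :=
  hs x (fderiv ℝ f x)

/-- The dual covariant derivative of a one-form:
`(∇*_v α)(x)(w) = (Dα(x)(v))(w) − α(x)(Γ(x)(v,w))`. -/
def dualD (Γ : E → E →L[ℝ] E →L[ℝ] E) (v : E) (α : E → (E →L[ℝ] ℝ)) (x : E) :
    E →L[ℝ] ℝ :=
  fderiv ℝ α x v - (α x).comp (Γ x v)

/-- The covariant derivative `(∇_v h)(α,β)(x)` of `h` in direction `v`. -/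
def nablaHG (hs : E → (E →L[ℝ] ℝ) →L[ℝ] E) (Γ : E → E →L[ℝ] E →L[ℝ] E)
    (v : E) (α β : E → (E →L[ℝ] ℝ)) (x : E) : ℝ :=
  fderiv ℝ (hfun hs α β) x v
    - (β x) (hs x (dualD Γ v α x))
    - (dualD Γ v β x) (hs x (α x))

/-- The Codazzi condition for `h` relative to the connection `Γ`. -/
def CodazziG (hs : E → (E →L[ℝ] ℝ) →L[ℝ] E) (Γ : E → E →L[ℝ] E →L[ℝ] E) : Prop :=
  ∀ α β γ : E → (E →L[ℝ] ℝ), ContDiff ℝ (⊤ : ℕ∞) α → ContDiff ℝ (⊤ : ℕ∞) β →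
    ContDiff ℝ (⊤ : ℕ∞) γ → ∀ x : E,
      nablaHG hs Γ (hs x (α x)) β γ x = nablaHG hs Γ (hs x (β x)) α γ x

lemma myDiffAt {F G : Type*} [NormedAddCommGroup F] [NormedSpace ℝ F]
    [NormedAddCommGroup G] [NormedSpace ℝ G]
    {φ : F → G} (h : ContDiff ℝ (⊤:ℕ∞) φ) (x : F) : DifferentiableAt ℝ φ x :=
  (h.differentiable (by simp)).differentiableAt

/-- Pointwise simplification of `nablaHG`. -/
lemma nabla_eq {hs : E → (E →L[ℝ] ℝ) →L[ℝ] E} {Γ : E → E →L[ℝ] E →L[ℝ] E}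
    (hsm : ContDiff ℝ (⊤:ℕ∞) hs) {α β : E → (E →L[ℝ] ℝ)}
    (hα : ContDiff ℝ (⊤:ℕ∞) α) (hβ : ContDiff ℝ (⊤:ℕ∞) β) (v x : E) :
    nablaHG hs Γ v α β x =
      (β x) ((fderiv ℝ hs x v) (α x)) + (β x) (hs x ((α x).comp (Γ x v)))
        + (β x) (Γ x v (hs x (α x))) := by
  have hsd := myDiffAt hsm x
  have hαd := myDiffAt hα x
  have hβd := myDiffAt hβ x
  have hinner : DifferentiableAt ℝ (fun y => hs y (α y)) x := hsd.clm_apply hαd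
  have h2 : fderiv ℝ (fun y => hs y (α y)) x
      = (hs x).comp (fderiv ℝ α x) + (fderiv ℝ hs x).flip (α x) :=
    fderiv_clm_apply hsd hαd
  have h1 : fderiv ℝ (hfun hs α β) x
      = (β x).comp (fderiv ℝ (fun y => hs y (α y)) x) + (fderiv ℝ β x).flip (hs x (α x)) :=
    fderiv_clm_apply hβd hinner
  simp only [nablaHG, dualD, h1, h2, ContinuousLinearMap.add_apply,
    ContinuousLinearMap.comp_apply, ContinuousLinearMap.flip_apply,
    ContinuousLinearMap.sub_apply, map_sub, map_add]
  ring

/-- Derivative of `y ↦ d (hs y c)` for constant `c`, `d`. -/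
lemma fderiv_pair {hs : E → (E →L[ℝ] ℝ) →L[ℝ] E} (hsm : ContDiff ℝ (⊤:ℕ∞) hs)
    (x v : E) (c : E →L[ℝ] ℝ) (d : E →L[ℝ] ℝ) :
    fderiv ℝ (fun y => d (hs y c)) x v = d ((fderiv ℝ hs x v) c) := by
  have hsd := myDiffAt hsm x
  have h1 : fderiv ℝ (fun y => hs y c) x
      = (hs x).comp (fderiv ℝ (fun _ : E => c) x) + (fderiv ℝ hs x).flip c :=
    fderiv_clm_apply hsd (differentiableAt_const c)
  have h2 : fderiv ℝ (fun y => d (hs y c)) x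
      = (d).comp (fderiv ℝ (fun y => hs y c) x)
        + (fderiv ℝ (fun _ : E => d) x).flip (hs x c) :=
    fderiv_clm_apply (differentiableAt_const d) (hsd.clm_apply (differentiableAt_const c))
  simp [h2, h1]

/-- Symmetry of the derivative of `hs`. -/
lemma dhs_sym {hs : E → (E →L[ℝ] ℝ) →L[ℝ] E} (hsm : ContDiff ℝ (⊤:ℕ∞) hs)
    (hsym : ∀ (x : E) (α β : E →L[ℝ] ℝ), β (hs x α) = α (hs x β))
    (x v : E) (a b : E →L[ℝ] ℝ) :
    b ((fderiv ℝ hs x v) a) = a ((fderiv ℝ hs x v) b) := by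
  have he : (fun y => b (hs y a)) = fun y => a (hs y b) := funext fun y => hsym y a b
  have hfd : fderiv ℝ (fun y => b (hs y a)) x v = fderiv ℝ (fun y => a (hs y b)) x v := by
    rw [he]
  rw [fderiv_pair hsm x v a b, fderiv_pair hsm x v b a] at hfd
  exact hfd

/-- Computation of `covD` for hamiltonian vector fields. -/
lemma covD_eq {hs : E → (E →L[ℝ] ℝ) →L[ℝ] E} {Γ : E → E →L[ℝ] E →L[ℝ] E}
    (hsm : ContDiff ℝ (⊤:ℕ∞) hs) {f m : E → ℝ}
    (hm : ContDiff ℝ (⊤:ℕ∞) m) (x : E) :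
    covD Γ (Xf hs f) (Xf hs m) x =
      hs x (fderiv ℝ (fderiv ℝ m) x (Xf hs f x))
        + (fderiv ℝ hs x (Xf hs f x)) (fderiv ℝ m x)
        + Γ x (Xf hs f x) (hs x (fderiv ℝ m x)) := by
  have hsd := myDiffAt hsm x
  have hmd : DifferentiableAt ℝ (fderiv ℝ m) x :=
    myDiffAt (hm.fderiv_right (le_refl _)) x
  have h2 : fderiv ℝ (fun y => hs y (fderiv ℝ m y)) x
      = (hs x).comp (fderiv ℝ (fderiv ℝ m) x) + (fderiv ℝ hs x).flip (fderiv ℝ m x) :=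
    fderiv_clm_apply hsd hmd
  have : Xf hs m = fun y => hs y (fderiv ℝ m y) := rfl
  rw [covD, this, h2]
  simp [Xf, ContinuousLinearMap.add_apply]

theorem stmt5 [FiniteDimensional ℝ E]
    (Γ : E → E →L[ℝ] E →L[ℝ] E) (hΓsm : ContDiff ℝ (⊤ : ℕ∞) Γ)
    (hΓsym : ∀ (x : E) (u v : E), Γ x u v = Γ x v u)
    (hs : E → (E →L[ℝ] ℝ) →L[ℝ] E) (hsm : ContDiff ℝ (⊤ : ℕ∞) hs)
    (hsym : ∀ (x : E) (α β : E →L[ℝ] ℝ), β (hs x α) = α (hs x β)) :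
    CodazziG hs Γ ↔
      (∀ f g m : E → ℝ, ContDiff ℝ (⊤ : ℕ∞) f → ContDiff ℝ (⊤ : ℕ∞) g →
        ContDiff ℝ (⊤ : ℕ∞) m → ∀ x : E,
          fderiv ℝ g x (covD Γ (Xf hs f) (Xf hs m) x)
            = fderiv ℝ f x (covD Γ (Xf hs g) (Xf hs m) x)) := by
  constructor
  · intro hc f g m hf hg hm x
    have hαf : ContDiff ℝ (⊤:ℕ∞) (fderiv ℝ f) := hf.fderiv_right (le_refl _)
    have hαg : ContDiff ℝ (⊤:ℕ∞) (fderiv ℝ g) := hg.fderiv_right (le_refl _)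
    have hαm : ContDiff ℝ (⊤:ℕ∞) (fderiv ℝ m) := hm.fderiv_right (le_refl _)
    have key := hc (fderiv ℝ f) (fderiv ℝ g) (fderiv ℝ m) hαf hαg hαm x
    rw [nabla_eq (Γ := Γ) hsm hαg hαm _ x, nabla_eq (Γ := Γ) hsm hαf hαm _ x] at key
    rw [covD_eq (f := f) hsm hm x, covD_eq (f := g) hsm hm x]
    simp only [Xf, map_add] at key ⊢
    set a := fderiv ℝ f x
    set b := fderiv ℝ g x
    set c := fderiv ℝ m x
    set va := hs x a
    set vb := hs x b
    set A := fderiv ℝ hs x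
    -- symmetry facts
    have f1 : c ((A va) b) = b ((A va) c) := dhs_sym hsm hsym x va b c
    have f1' : c ((A vb) a) = a ((A vb) c) := dhs_sym hsm hsym x vb a c
    have f2 : c (hs x (b.comp (Γ x va))) = b (Γ x va (hs x c)) := by
      have := hsym x (b.comp (Γ x va)) c
      simpa using this
    have f2' : c (hs x (a.comp (Γ x vb))) = a (Γ x vb (hs x c)) := by
      have := hsym x (a.comp (Γ x vb)) c
      simpa using this
    have f3 : c (Γ x va vb) = c (Γ x vb va) := by rw [hΓsym x va vb]
    have f4 : b (hs x (fderiv ℝ (fderiv ℝ m) x va)) = a (hs x (fderiv ℝ (fderiv ℝ m) x vb)) := by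
      have s1 := hsym x (fderiv ℝ (fderiv ℝ m) x va) b
      have s2 := hsym x (fderiv ℝ (fderiv ℝ m) x vb) a
      have s3 : fderiv ℝ (fderiv ℝ m) x va vb = fderiv ℝ (fderiv ℝ m) x vb va :=
        (hm.contDiffAt.isSymmSndFDerivAt (by simp; exact WithTop.coe_le_coe.mpr le_top)) va vb
      rw [s1, s2, s3]
    linarith [key, f1, f1', f2, f2', f3, f4]
  · intro h3 α β γ hα hβ hγ x
    rw [nabla_eq (Γ := Γ) hsm hβ hγ _ x, nabla_eq (Γ := Γ) hsm hα hγ _ x]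
    set a := α x
    set b := β x
    set c := γ x
    have ecov : ∀ p q : E →L[ℝ] ℝ, covD Γ (Xf hs ⇑p) (Xf hs ⇑q) x
        = (fderiv ℝ hs x (hs x p)) q + Γ x (hs x p) (hs x q) := by
      intro p q
      have e2 : fderiv ℝ (⇑q) = fun _ : E => q := funext fun y => q.fderiv
      rw [covD_eq (f := ⇑p) hsm q.contDiff x]
      simp [Xf, e2, ContinuousLinearMap.fderiv]
    have key := h3 ⇑a ⇑b ⇑c a.contDiff b.contDiff c.contDiff x
    rw [ecov a c, ecov b c] at key
    simp only [ContinuousLinearMap.fderiv, map_add] at key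
    set va := hs x a
    set vb := hs x b
    set A := fderiv ℝ hs x
    have g1 : c ((A va) b) = b ((A va) c) := dhs_sym hsm hsym x va b c
    have g1' : c ((A vb) a) = a ((A vb) c) := dhs_sym hsm hsym x vb a c
    have g2 : c (hs x (b.comp (Γ x va))) = b (Γ x va (hs x c)) := by
      have := hsym x (b.comp (Γ x va)) c
      simpa using this
    have g2' : c (hs x (a.comp (Γ x vb))) = a (Γ x vb (hs x c)) := by
      have := hsym x (a.comp (Γ x vb)) c
      simpa using this
    have g3 : c (Γ x va vb) = c (Γ x vb va) := by rw [hΓsym x va vb]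
    linarith [key, g1, g1', g2, g2', g3]

end
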